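/- arXiv:1601.06474 — 2 statements merged into one kernel-verified Lean document; each statement's English description precedes it below -/
import Mathlib

section
/- Let X₁,…,X_N be i.i.d. Exp(λ) random variables and let i* be the index of the minimum. Then the expected number of indices j ≠ i* with X_j < X_{i*} + l equals (N−1)(1 − e^{−λl}). -/
open MeasureTheory
open scoped Classical

/-!
Write `M_j` for the minimum of the `X_i` with `i ≠ j`. Node `j` discovers the transmitter exactly
when `M_j < X_j < M_j + l`. The variable `M_j` is independent of `X_j` and exponential with rate
`(N - 1) r`, being a minimum of independent exponentials. Conditioning on `M_j = m` and using
`P(m < X_j < m + l) = e^{-r m} (1 - e^{-r l})` gives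
`P(j discovers) = (1 - e^{-r l}) E[e^{-r M_j}] = (1 - e^{-r l}) (N - 1) / N`,
and summing over the `N` nodes gives the result.
-/

open ProbabilityTheory Real Set

lemma ciInf_eq_inf_ciInf_compl {ι α : Type*} [Fintype ι] [DecidableEq ι]
    [ConditionallyCompleteLinearOrder α] (f : ι → α) {j : ι}
    (hj : ({j}ᶜ : Finset ι).Nonempty) :
    ⨅ i, f i = f j ⊓ ⨅ i : ({j}ᶜ : Finset ι), f i := by
  have : Nonempty ι := ⟨j⟩
  have : Nonempty ({j}ᶜ : Finset ι) := hj.to_subtype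
  refine le_antisymm (le_inf (ciInf_le (Finite.bddBelow_range _) j)
    (le_ciInf fun i => ciInf_le (Finite.bddBelow_range _) i.1)) (le_ciInf fun i => ?_)
  by_cases hij : i = j
  · exact hij ▸ inf_le_left
  · exact inf_le_right.trans
      (ciInf_le (Finite.bddBelow_range _) (⟨i, by simpa using hij⟩ : ({j}ᶜ : Finset ι)))

lemma ne_inf_and_lt_inf_add_iff {α : Type*} [LinearOrder α] [Add α] {a b l : α} :
    (a ≠ a ⊓ b ∧ a < a ⊓ b + l) ↔ (b < a ∧ a < b + l) := by
  rcases le_or_gt a b with h | h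
  · simp [inf_eq_left.2 h, not_lt.2 h]
  · simp [inf_eq_right.2 h.le, h.ne', h]

lemma MeasureTheory.Measure.ext_of_Ioi {α : Type*} [TopologicalSpace α] [MeasurableSpace α]
    [LinearOrder α] [OrderTopology α] [SecondCountableTopology α] [BorelSpace α]
    (μ ν : Measure α) [IsProbabilityMeasure μ] [IsProbabilityMeasure ν]
    (h : ∀ t, μ (Ioi t) = ν (Ioi t)) : μ = ν :=
  Measure.ext_of_Iic μ ν fun t => by
    rw [← compl_Ioi, prob_compl_eq_one_sub measurableSet_Ioi,
      prob_compl_eq_one_sub measurableSet_Ioi, h]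

lemma MeasureTheory.integral_card_filter {Ω ι : Type*} [MeasurableSpace Ω] {μ : Measure Ω}
    [IsFiniteMeasure μ] [Fintype ι] (P : ι → Ω → Prop) [∀ j ω, Decidable (P j ω)]
    (hP : ∀ j, MeasurableSet {ω | P j ω}) :
    ∫ ω, ((Finset.univ.filter fun j => P j ω).card : ℝ) ∂μ = ∑ j, μ.real {ω | P j ω} := by
  have hcard : ∀ ω, ((Finset.univ.filter fun j => P j ω).card : ℝ)
      = ∑ j, {ω | P j ω}.indicator 1 ω := by
    intro ω
    rw [Finset.card_filter, Nat.cast_sum]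
    refine Finset.sum_congr rfl fun j _ => ?_
    by_cases h : P j ω <;> simp [h]
  simp_rw [hcard]
  rw [integral_finsetSum _ fun j _ => (integrable_const 1).indicator (hP j)]
  simp_rw [integral_indicator_one (hP _)]

namespace ProbabilityTheory

instance nullSingletonClass_expMeasure (r : ℝ) : NullSingletonClass (expMeasure r) :=
  nullSingletonClass_withDensity _

lemma expMeasure_Ioi {r : ℝ} (hr : 0 < r) (t : ℝ) :
    expMeasure r (Ioi t) = ENNReal.ofReal (exp (-(r * max t 0))) := by
  have := isProbabilityMeasure_expMeasure hr
  rw [← compl_Iic, prob_compl_eq_one_sub measurableSet_Iic, ← ofReal_cdf, cdf_expMeasure_eq hr]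
  rcases le_or_gt 0 t with ht | ht
  · have : exp (-(r * t)) ≤ 1 := exp_le_one_iff.2 (by nlinarith)
    rw [if_pos ht, max_eq_left ht, ← ENNReal.ofReal_one,
      ← ENNReal.ofReal_sub _ (sub_nonneg.2 this), sub_sub_cancel]
  · simp [if_neg (not_le.2 ht), max_eq_right ht.le]

lemma expMeasure_Ioo_add {r l : ℝ} (hr : 0 < r) (hl : 0 ≤ l) {a : ℝ} (ha : 0 ≤ a) :
    expMeasure r (Ioo a (a + l))
      = ENNReal.ofReal (1 - exp (-(r * l))) * ENNReal.ofReal (exp (-(r * a))) := by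
  have := isProbabilityMeasure_expMeasure hr
  rw [measure_congr Ioo_ae_eq_Ioc, ← Ioi_sdiff_Ioi,
    measure_sdiff (Ioi_subset_Ioi (by linarith)) measurableSet_Ioi.nullMeasurableSet
      (measure_ne_top _ _),
    expMeasure_Ioi hr, expMeasure_Ioi hr, max_eq_left ha, max_eq_left (by linarith),
    ← ENNReal.ofReal_sub _ (exp_nonneg _),
    ← ENNReal.ofReal_mul (sub_nonneg.2 (exp_le_one_iff.2 (by nlinarith)))]
  congr 1
  rw [show -(r * (a + l)) = -(r * a) + -(r * l) by ring, exp_add]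
  ring

lemma expMeasure_ae_nonneg {r : ℝ} (hr : 0 < r) : ∀ᵐ x ∂expMeasure r, 0 ≤ x := by
  have := isProbabilityMeasure_expMeasure hr
  refine ae_iff.2 (measure_mono_null (t := Iic 0) (fun x hx => le_of_lt (not_le.1 hx)) ?_)
  rw [← ofReal_cdf, cdf_expMeasure_eq hr]
  simp

lemma measurable_exponentialPDF (r : ℝ) : Measurable (exponentialPDF r) :=
  (measurable_exponentialPDFReal r).ennreal_ofReal

lemma lintegral_exp_neg_mul_expMeasure {r s : ℝ} (hr : 0 < r) (hs : 0 ≤ s) :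
    ∫⁻ x, ENNReal.ofReal (exp (-(s * x))) ∂expMeasure r = ENNReal.ofReal (r / (s + r)) := by
  have hsr : 0 < s + r := by linarith
  have hdensity : ∀ x, exponentialPDF r x * ENNReal.ofReal (exp (-(s * x)))
      = ENNReal.ofReal (r / (s + r)) * exponentialPDF (s + r) x := by
    intro x
    rcases le_or_gt 0 x with hx | hx
    · rw [exponentialPDF_of_nonneg hx, exponentialPDF_of_nonneg hx,
        ← ENNReal.ofReal_mul (by positivity), ← ENNReal.ofReal_mul (by positivity)]
      congr 1
      rw [show -((s + r) * x) = -(r * x) + -(s * x) by ring, exp_add]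
      field_simp
    · simp [exponentialPDF_of_neg hx]
  change ∫⁻ x, _ ∂volume.withDensity (exponentialPDF r) = _
  rw [lintegral_withDensity_eq_lintegral_mul _ (measurable_exponentialPDF r) (by fun_prop)]
  simp only [Pi.mul_apply, hdensity]
  rw [lintegral_const_mul _ (measurable_exponentialPDF _),
    lintegral_exponentialPDF_eq_one hsr, mul_one]

variable {Ω ι : Type*} [MeasurableSpace Ω] {μ : Measure Ω}

lemma iIndepFun.indepFun_iInf {X : ι → Ω → ℝ} (hX : ∀ i, Measurable (X i))
    (hindep : iIndepFun X μ) {j : ι} {T : Finset ι} (hj : j ∉ T) :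
    IndepFun (X j) (fun ω => ⨅ i : T, X i ω) μ := by
  have h := hindep.indepFun_finset {j} T (Finset.disjoint_singleton_left.2 hj) hX
  exact h.comp (φ := fun v : ({j} : Finset ι) → ℝ => v ⟨j, Finset.mem_singleton_self j⟩)
    (ψ := fun v : T → ℝ => ⨅ i, v i) (measurable_pi_apply _) (.iInf measurable_pi_apply)

variable [IsProbabilityMeasure μ]

lemma IndepFun.measureReal_lt_lt_add_of_expMeasure {f g : Ω → ℝ} {r s l : ℝ}
    (hr : 0 < r) (hs : 0 < s) (hl : 0 ≤ l) (hf : Measurable f) (hg : Measurable g)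
    (hfg : IndepFun f g μ) (hfμ : μ.map f = expMeasure r) (hgμ : μ.map g = expMeasure s) :
    μ.real {ω | g ω < f ω ∧ f ω < g ω + l} = (1 - exp (-(r * l))) * (s / (r + s)) := by
  have := isProbabilityMeasure_expMeasure hr
  have := isProbabilityMeasure_expMeasure hs
  set S : Set (ℝ × ℝ) := {p | p.2 < p.1 ∧ p.1 < p.2 + l}
  have hS : MeasurableSet S :=
    (measurableSet_lt measurable_snd measurable_fst).inter
      (measurableSet_lt measurable_fst (measurable_snd.add_const l))
  have hjoint : μ.map (fun ω => (f ω, g ω)) = (expMeasure r).prod (expMeasure s) := by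
    rw [← hfμ, ← hgμ]
    exact (indepFun_iff_map_prod_eq_prod_map_map hf.aemeasurable hg.aemeasurable).1 hfg
  have hsection : ∀ᵐ y ∂expMeasure s, expMeasure r ((·, y) ⁻¹' S)
      = ENNReal.ofReal (1 - exp (-(r * l))) * ENNReal.ofReal (exp (-(r * y))) := by
    filter_upwards [expMeasure_ae_nonneg hs] with y hy
    exact expMeasure_Ioo_add hr hl hy
  have hmeas : μ {ω | g ω < f ω ∧ f ω < g ω + l}
      = ENNReal.ofReal (1 - exp (-(r * l))) * ENNReal.ofReal (s / (r + s)) := by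
    rw [show {ω | g ω < f ω ∧ f ω < g ω + l} = (fun ω => (f ω, g ω)) ⁻¹' S from rfl,
      ← Measure.map_apply (hf.prodMk hg) hS, hjoint, Measure.prod_apply_symm hS,
      lintegral_congr_ae hsection, lintegral_const_mul _ (by fun_prop),
      lintegral_exp_neg_mul_expMeasure hs hr.le]
  rw [measureReal_def, hmeas, ENNReal.toReal_mul,
    ENNReal.toReal_ofReal (sub_nonneg.2 (exp_le_one_iff.2 (by nlinarith))),
    ENNReal.toReal_ofReal (by positivity)]

lemma iIndepFun.map_iInf_eq_expMeasure {X : ι → Ω → ℝ} {r : ℝ} (hr : 0 < r)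
    (hX : ∀ i, Measurable (X i)) (hindep : iIndepFun X μ) (hXμ : ∀ i, μ.map (X i) = expMeasure r)
    {T : Finset ι} (hT : T.Nonempty) :
    μ.map (fun ω => ⨅ i : T, X i ω) = expMeasure (T.card * r) := by
  have := isProbabilityMeasure_expMeasure (mul_pos (Nat.cast_pos.2 hT.card_pos) hr)
  have : Nonempty T := hT.to_subtype
  have hmin : Measurable (fun ω => ⨅ i : T, X i ω) := .iInf fun i => hX i
  have := Measure.isProbabilityMeasure_map (μ := μ) hmin.aemeasurable
  refine Measure.ext_of_Ioi _ _ fun t => ?_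
  have hpre : (fun ω => ⨅ i : T, X i ω) ⁻¹' Ioi t = ⋂ i ∈ T, X i ⁻¹' Ioi t := by
    ext ω
    simp only [mem_preimage, mem_Ioi, mem_iInter]
    constructor
    · exact fun h i hi => h.trans_le (ciInf_le (Finite.bddBelow_range _) (⟨i, hi⟩ : T))
    · intro h
      obtain ⟨i, hi⟩ := exists_eq_ciInf_of_finite (f := fun i : T => X i ω)
      exact hi ▸ h i i.2
  rw [Measure.map_apply hmin measurableSet_Ioi, hpre,
    hindep.meas_biInter fun i _ => ⟨Ioi t, measurableSet_Ioi, rfl⟩]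
  simp_rw [← Measure.map_apply (hX _) measurableSet_Ioi, hXμ, expMeasure_Ioi hr]
  rw [Finset.prod_const, ← ENNReal.ofReal_pow (exp_nonneg _), ← exp_nat_mul,
    expMeasure_Ioi (mul_pos (Nat.cast_pos.2 hT.card_pos) hr)]
  congr 2
  ring

lemma iIndepFun.measureReal_ne_iInf_and_lt_iInf_add [Fintype ι] {X : ι → Ω → ℝ} {r l : ℝ}
    (hr : 0 < r) (hl : 0 ≤ l) (hX : ∀ i, Measurable (X i)) (hindep : iIndepFun X μ)
    (hXμ : ∀ i, μ.map (X i) = expMeasure r) (hι : 1 < Fintype.card ι) (j : ι) :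
    μ.real {ω | X j ω ≠ ⨅ i, X i ω ∧ X j ω < (⨅ i, X i ω) + l}
      = (1 - exp (-(r * l))) * ((Fintype.card ι - 1) / Fintype.card ι) := by
  classical
  have hcard : (({j}ᶜ : Finset ι).card : ℝ) = Fintype.card ι - 1 := by
    rw [Finset.card_compl, Finset.card_singleton, Nat.cast_sub hι.le, Nat.cast_one]
  have hj : ({j}ᶜ : Finset ι).Nonempty :=
    Finset.card_pos.1 (by rw [Finset.card_compl, Finset.card_singleton]; omega)
  have hevent : {ω | X j ω ≠ ⨅ i, X i ω ∧ X j ω < (⨅ i, X i ω) + l}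
      = {ω | ⨅ i : ({j}ᶜ : Finset ι), X i ω < X j ω
          ∧ X j ω < (⨅ i : ({j}ᶜ : Finset ι), X i ω) + l} := by
    ext ω
    simp only [mem_ofPred_eq, ciInf_eq_inf_ciInf_compl _ hj]
    exact ne_inf_and_lt_inf_add_iff
  have hι' : (1 : ℝ) < Fintype.card ι := by exact_mod_cast hι
  have hindepM := hindep.indepFun_iInf hX (Finset.notMem_compl.2 (Finset.mem_singleton_self j))
  have hMμ := hindep.map_iInf_eq_expMeasure hr hX hXμ hj
  rw [hcard] at hMμ
  rw [hevent, hindepM.measureReal_lt_lt_add_of_expMeasure hr (by nlinarith) hl (hX j)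
    (.iInf fun _ => hX _) (hXμ j) hMμ,
    show r + (Fintype.card ι - 1) * r = Fintype.card ι * r by ring, mul_div_mul_right _ _ hr.ne']

end ProbabilityTheory

theorem stmt_4 {Ω : Type*} [MeasurableSpace Ω] (μ : Measure Ω) [IsProbabilityMeasure μ]
    (N : ℕ) (hN : 2 ≤ N) (r l : ℝ) (hr : 0 < r) (hl : 0 < l)
    (X : Fin N → Ω → ℝ) (hmeas : ∀ i, Measurable (X i))
    (hindep : ProbabilityTheory.iIndepFun X μ)
    (hmap : ∀ i, Measure.map (X i) μ = ProbabilityTheory.expMeasure r) :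
    (∫ ω, ((Finset.univ.filter
        (fun j : Fin N => X j ω ≠ (⨅ i, X i ω) ∧ X j ω < (⨅ i, X i ω) + l)).card : ℝ) ∂μ)
      = (N - 1) * (1 - Real.exp (-(r * l))) := by
  have hmin : Measurable fun ω => ⨅ i, X i ω := .iInf hmeas
  rw [integral_card_filter (fun j ω => X j ω ≠ (⨅ i, X i ω) ∧ X j ω < (⨅ i, X i ω) + l)
    fun j => (measurableSet_eq_fun (hmeas j) hmin).compl.inter
      (measurableSet_lt (hmeas j) (hmin.add_const l))]
  simp_rw [hindep.measureReal_ne_iInf_and_lt_iInf_add hr hl.le hmeas hmap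
    (by rw [Fintype.card_fin]; omega), Fintype.card_fin]
  rw [Finset.sum_const, Finset.card_univ, Fintype.card_fin, nsmul_eq_mul]
  field_simp
end

section
/- Define f(l) := (N−1)·λ(l)·l / (1/(Nλ(l)) + l + M) where λ(l) = P_b/(A + P_r l − N P_b(M + l)) and A := C_rs + C_st + P_t M. Then f attains its maximum over l > 0 at l* = sqrt(P_r(P_r − N P_b)·A·(A − M N P_b)) / (P_r² − N P_r P_b), assuming P_r > N P_b and A > M N P_b. -/
theorem stmt_12 (N : ℕ) (hN : 2 ≤ N) (Pb Pr Pt M Crs Cst : ℝ)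
    (hPb : 0 < Pb) (hPr : 0 < Pr) (hPt : 0 < Pt) (hM : 0 < M)
    (hCrs : 0 < Crs) (hCst : 0 < Cst)
    (A : ℝ) (hA : A = Crs + Cst + Pt * M)
    (hPrN : (N : ℝ) * Pb < Pr) (hAN : M * N * Pb < A)
    (lamf : ℝ → ℝ)
    (hlamf : ∀ l, lamf l = Pb / (A + Pr * l - N * Pb * (M + l)))
    (f : ℝ → ℝ)
    (hf : ∀ l, f l = ((N : ℝ) - 1) * lamf l * l / (1 / (N * lamf l) + l + M))
    (lstar : ℝ)
    (hlstar : lstar = Real.sqrt (Pr * (Pr - N * Pb) * A * (A - M * N * Pb))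
        / (Pr ^ 2 - N * Pr * Pb)) :
    0 < lstar ∧ ∀ l, 0 < l → f l ≤ f lstar := by
  have hNR : (2:ℝ) ≤ (N:ℝ) := by exact_mod_cast hN
  have hN0 : (0:ℝ) < (N:ℝ) := by linarith
  set b := Pr - (N:ℝ) * Pb with hb
  set a := A - M * (N:ℝ) * Pb with ha
  have hbpos : 0 < b := by rw [hb]; linarith
  have hapos : 0 < a := by rw [ha]; linarith
  have hApos : 0 < A := by
    have : 0 < M * (N:ℝ) * Pb := by positivity
    linarith
  have hPrb : Pr ^ 2 - (N:ℝ) * Pr * Pb = Pr * b := by rw [hb]; ring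
  have hX : (0:ℝ) ≤ Pr * b * A * a := by positivity
  have hspos : 0 < lstar := by
    rw [hlstar, hPrb]
    apply div_pos
    · exact Real.sqrt_pos.mpr (by positivity)
    · positivity
  have hPrbne : Pr * b ≠ 0 := by positivity
  have hkey : b * Pr * lstar ^ 2 = a * A := by
    rw [hlstar, hPrb, div_pow, Real.sq_sqrt hX]
    field_simp
  have hfval : ∀ l, 0 < l →
      f l = ((N:ℝ) - 1) * ((N:ℝ) * Pb ^ 2) * l / ((a + b * l) * (A + Pr * l)) := by
    intro l hl
    have hD : 0 < a + b * l := by positivity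
    have hEq : A + Pr * l - (N:ℝ) * Pb * (M + l) = a + b * l := by
      rw [ha, hb]; ring
    have hAl : 0 < A + Pr * l := by positivity
    rw [hf, hlamf, hEq]
    rw [div_eq_div_iff]
    · field_simp
      ring
    · have hlam : 0 < Pb / (a + b * l) := by positivity
      have h1 : 0 < 1 / ((N:ℝ) * (Pb / (a + b * l))) := by positivity
      linarith
    · positivity
  refine ⟨hspos, fun l hl => ?_⟩
  rw [hfval l hl, hfval lstar hspos]
  have hDl : 0 < a + b * l := by positivity
  have hDs : 0 < a + b * lstar := by positivity
  have hAl : 0 < A + Pr * l := by positivity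
  have hAs : 0 < A + Pr * lstar := by positivity
  rw [div_le_div_iff₀ (by positivity) (by positivity)]
  have hident : lstar * ((a + b * l) * (A + Pr * l))
      - l * ((a + b * lstar) * (A + Pr * lstar))
      = b * Pr * lstar * (lstar - l) ^ 2 := by
    linear_combination (l - lstar) * hkey
  have hsq : 0 ≤ b * Pr * lstar * (lstar - l) ^ 2 := by positivity
  have h2 : l * ((a + b * lstar) * (A + Pr * lstar))
      ≤ lstar * ((a + b * l) * (A + Pr * l)) := by linarith
  have hc : (0:ℝ) ≤ ((N:ℝ) - 1) * ((N:ℝ) * Pb ^ 2) := mul_nonneg (by linarith) (by positivity)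
  nlinarith [mul_le_mul_of_nonneg_left h2 hc]
end
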